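/- Let p > 1 and q = p/(p-1). The pair (ρ, φ) defined on ℝⁿ × (0,∞) by ρ(x,t) = c_{n,p} t^{-n} exp(-(p-1)‖x‖^q/(pt)^q) and φ(x,t) = ‖x‖^q/(q t^{q-1}) satisfies the p-continuity equation ∂ρ/∂t + ∇·(ρ |∇φ|^{p-2} ∇φ) = 0 on ℝⁿ \ {0} for each t > 0, where c_{n,p} is any positive constant. -/

import Mathlib

/-!
For conjugate exponents, `∇φ = ‖x‖^(q-2) x / t^(q-1)`, and since `(q - 1)(p - 1) = 1` the flux
`|∇φ|^(p-2) ∇φ` is just `x / t`. The divergence of the radial field `ρ x / t` is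
`(ρ / t) (n + x · ∇ρ / ρ) = (ρ / t) (n - (p - 1) q ‖x‖^q / (p t)^q)`, which is exactly `-∂ₜρ`.
-/

open Real

/-- Euclidean divergence of a vector field on ℝⁿ. -/
noncomputable def diverg {n : ℕ}
    (v : EuclideanSpace ℝ (Fin n) → EuclideanSpace ℝ (Fin n))
    (x : EuclideanSpace ℝ (Fin n)) : ℝ :=
  ∑ i, fderiv ℝ (fun y => v y i) x (EuclideanSpace.single i 1)

section InnerProductSpace

variable {E : Type*} [NormedAddCommGroup E] [InnerProductSpace ℝ E]

theorem hasGradientAt_norm_rpow_div_mul [CompleteSpace E] {q : ℝ} (hq : 1 < q) (d : ℝ)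
    (y : E) : HasGradientAt (fun z : E ↦ ‖z‖ ^ q / (q * d)) ((‖y‖ ^ (q - 2) / d) • y) y := by
  rw [hasGradientAt_iff_hasFDerivAt]
  simp_rw [div_eq_mul_inv _ (q * d)]
  refine ((hasFDerivAt_norm_rpow y hq).mul_const (q * d)⁻¹).congr_fderiv ?_
  ext w
  have hq0 : q ≠ 0 := by positivity
  simp only [smul_apply, coe_innerSL_apply, smul_eq_mul, map_smul,
    InnerProductSpace.toDual_apply_apply]
  field_simp

theorem norm_rpow_sub_two_smul_eq_inv_smul {p q t : ℝ} (hpq : p.HolderConjugate q) (ht : 0 < t)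
    {y : E} (hy : y ≠ 0) :
    ‖(‖y‖ ^ (q - 2) / t ^ (q - 1)) • y‖ ^ (p - 2) • (‖y‖ ^ (q - 2) / t ^ (q - 1)) • y
      = t⁻¹ • y := by
  have hr : 0 < ‖y‖ / t := div_pos (norm_pos_iff.2 hy) ht
  have hexp : (q - 1) * (p - 2) + (q - 2) = 0 := by linear_combination hpq.symm.mul_eq_add
  have hs : ‖y‖ ^ (q - 2) / t ^ (q - 1) = (‖y‖ / t) ^ (q - 2) * t⁻¹ := by
    rw [div_rpow (norm_nonneg y) ht.le, show q - 1 = q - 2 + 1 by ring, rpow_add_one ht.ne']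
    field_simp
  have hns : ‖y‖ ^ (q - 2) / t ^ (q - 1) * ‖y‖ = (‖y‖ / t) ^ (q - 1) := by
    rw [hs, show q - 1 = q - 2 + 1 by ring, rpow_add_one hr.ne']
    field_simp
  rw [norm_smul, norm_of_nonneg (by positivity), hns, smul_smul, hs, ← rpow_mul hr.le,
    ← mul_assoc, ← rpow_add hr, hexp, rpow_zero, one_mul]

end InnerProductSpace

theorem diverg_smul_self {n : ℕ} {g : EuclideanSpace ℝ (Fin n) → ℝ}
    {g' : EuclideanSpace ℝ (Fin n) →L[ℝ] ℝ} {x : EuclideanSpace ℝ (Fin n)}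
    (hg : HasFDerivAt g g' x) : diverg (fun y ↦ g y • y) x = n * g x + g' x := by
  have hcoord (i : Fin n) : HasFDerivAt (fun y ↦ g y * y i)
      (g x • EuclideanSpace.proj i + x i • g') x :=
    hg.mul (EuclideanSpace.proj (𝕜 := ℝ) i).hasFDerivAt
  have hx : ∑ i, x i • EuclideanSpace.single i (1 : ℝ) = x := by
    simpa using (EuclideanSpace.basisFun (Fin n) ℝ).sum_repr x
  have hg'x : g' x = ∑ i, x i * g' (EuclideanSpace.single i 1) := by
    conv_lhs => rw [← hx]
    simp [map_sum]
  simp only [diverg, PiLp.smul_apply, smul_eq_mul, fun i ↦ (hcoord i).fderiv]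
  simp [Finset.sum_add_distrib, hg'x]

theorem Filter.EventuallyEq.diverg_eq {n : ℕ}
    {v w : EuclideanSpace ℝ (Fin n) → EuclideanSpace ℝ (Fin n)} {x : EuclideanSpace ℝ (Fin n)}
    (h : v =ᶠ[nhds x] w) : diverg v x = diverg w x := by
  refine Finset.sum_congr rfl fun i _ ↦ ?_
  rw [Filter.EventuallyEq.fderiv_eq (h.mono fun y hy ↦ congrArg (· i) hy)]

theorem diverg_exp_mul_norm_rpow_smul_self {n : ℕ} {q : ℝ} (hq : 1 < q) (K a : ℝ)
    (x : EuclideanSpace ℝ (Fin n)) :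
    diverg (fun y ↦ (K * exp (a * ‖y‖ ^ q)) • y) x
      = K * exp (a * ‖x‖ ^ q) * (n + a * q * ‖x‖ ^ q) := by
  have hg := (((hasFDerivAt_norm_rpow x hq).const_mul a).exp).const_mul K
  rw [diverg_smul_self hg]
  have hx : ‖x‖ ^ (q - 2) * ‖x‖ ^ 2 = ‖x‖ ^ q := by
    rw [← rpow_natCast, ← rpow_add' (norm_nonneg x) (by norm_num; linarith)]
    norm_num
  simp only [smul_apply, innerSL_apply_apply, real_inner_self_eq_norm_sq, smul_eq_mul]
  linear_combination K * exp (a * ‖x‖ ^ q) * a * q * hx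

theorem hasDerivAt_mul_rpow_neg_mul_exp_neg_div_rpow (c m b : ℝ) {a q t : ℝ} (ha : 0 < a)
    (ht : 0 < t) :
    HasDerivAt (fun s ↦ c * s ^ (-m) * exp (-b / (a * s) ^ q))
      (c * t ^ (-m) * exp (-b / (a * t) ^ q) * ((q * b / (a * t) ^ q - m) / t)) t := by
  have hat : 0 < a * t := mul_pos ha ht
  have hpow : HasDerivAt (fun s ↦ (a * s) ^ q) (a * q * (a * t) ^ (q - 1)) t := by
    simpa using ((hasDerivAt_id t).const_mul a).rpow_const (p := q) (Or.inl hat.ne')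
  have hexp := ((hasDerivAt_const t (-b)).fun_div hpow (rpow_pos_of_pos hat q).ne').exp
  refine (((hasDerivAt_rpow_const (Or.inl ht.ne')).const_mul c).mul hexp).congr_deriv ?_
  rw [rpow_sub_one hat.ne', rpow_sub_one ht.ne']
  field_simp
  ring

theorem stmt1_general (n : ℕ) (p q : ℝ) (hp : 1 < p) (hq : q = p / (p - 1))
    (c : ℝ)
    (ρ φ : EuclideanSpace ℝ (Fin n) → ℝ → ℝ)
    (hρ : ∀ x t, ρ x t = c * t ^ (-(n : ℝ)) * exp (-(p - 1) * ‖x‖ ^ q / (p * t) ^ q))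
    (hφ : ∀ x t, φ x t = ‖x‖ ^ q / (q * t ^ (q - 1))) :
    ∀ t : ℝ, 0 < t → ∀ x : EuclideanSpace ℝ (Fin n), x ≠ 0 →
      deriv (fun s => ρ x s) t
        + diverg (fun y => ρ y t •
            (‖gradient (fun z => φ z t) y‖ ^ (p - 2) • gradient (fun z => φ z t) y)) x = 0 := by
  intro t ht x hx
  have hpq : p.HolderConjugate q := (holderConjugate_iff_eq_conjExponent hp).2 hq
  have hflux : (fun y => ρ y t •
      (‖gradient (fun z => φ z t) y‖ ^ (p - 2) • gradient (fun z => φ z t) y))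
      =ᶠ[nhds x]
        fun y => (c * t ^ (-(n : ℝ)) * t⁻¹ * exp (-(p - 1) / (p * t) ^ q * ‖y‖ ^ q)) • y := by
    filter_upwards [isOpen_compl_singleton.mem_nhds hx] with y hy
    have hgrad : gradient (fun z => φ z t) y = (‖y‖ ^ (q - 2) / t ^ (q - 1)) • y := by
      simp only [hφ]
      exact (hasGradientAt_norm_rpow_div_mul hpq.symm.lt _ y).gradient
    rw [hgrad, norm_rpow_sub_two_smul_eq_inv_smul hpq ht hy, smul_smul, hρ]
    ring_nf
  have hρt := hasDerivAt_mul_rpow_neg_mul_exp_neg_div_rpow c n ((p - 1) * ‖x‖ ^ q)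
    (q := q) hpq.pos ht
  rw [hflux.diverg_eq, diverg_exp_mul_norm_rpow_smul_self hpq.symm.lt]
  simp only [hρ, neg_mul]
  rw [hρt.deriv]
  field_simp
  ring

/-- The special pair (ρ, φ) on ℝⁿ × (0,∞), with ρ(x,t) = c t^{-n} exp(-(p-1)‖x‖^q/(pt)^q)
and φ(x,t) = ‖x‖^q/(q t^{q-1}), satisfies the p-continuity equation
∂_t ρ + ∇·(ρ |∇φ|^{p-2} ∇φ) = 0 on ℝⁿ \ {0} for each t > 0. -/
theorem stmt1 (n : ℕ) (p q : ℝ) (hp : 1 < p) (hq : q = p / (p - 1))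
    (c : ℝ) (hc : 0 < c)
    (ρ φ : EuclideanSpace ℝ (Fin n) → ℝ → ℝ)
    (hρ : ∀ x t, ρ x t = c * t ^ (-(n : ℝ)) * exp (-(p - 1) * ‖x‖ ^ q / (p * t) ^ q))
    (hφ : ∀ x t, φ x t = ‖x‖ ^ q / (q * t ^ (q - 1))) :
    ∀ t : ℝ, 0 < t → ∀ x : EuclideanSpace ℝ (Fin n), x ≠ 0 →
      deriv (fun s => ρ x s) t
        + diverg (fun y => ρ y t •
            (‖gradient (fun z => φ z t) y‖ ^ (p - 2) • gradient (fun z => φ z t) y)) x = 0 :=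
  stmt1_general n p q hp hq c ρ φ hρ hφ
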